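/- Let W : Ω → ℝ^{m×m} be a random matrix that is almost surely symmetric with each row and each column summing to one, such that WᵀW is Bochner-integrable, and let ρ := ‖E[WᵀW] - J‖. Then ρ is the least constant c ≥ 0 such that E[‖X(W - J)‖_F²] ≤ c·‖X(I - J)‖_F² holds for every real d×m matrix X (for any d ≥ 1); i.e., ρ = inf{c ≥ 0 : ∀X, E[‖X(W - J)‖_F²] ≤ c·‖X(I - J)‖_F²}. Equivalently, the constant p defined as the largest value with E[‖X(W - J)‖_F²] ≤ (1 - p)·‖X(I - J)‖_F² for all X satisfies p = 1 - ρ. -/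

import Mathlib

open Matrix MeasureTheory
open scoped InnerProductSpace

/-- The spectral norm (largest singular value) of a real `m × m` matrix,
realized as the operator norm of the induced map on Euclidean space. -/
noncomputable def specNorm {m : ℕ} (A : Matrix (Fin m) (Fin m) ℝ) : ℝ :=
  ‖Matrix.toEuclideanCLM (𝕜 := ℝ) (n := Fin m) A‖

/-- The matrix `J = (1/m)·11ᵀ`, with all entries equal to `1/m`. -/
noncomputable def Jmat (m : ℕ) : Matrix (Fin m) (Fin m) ℝ :=
  Matrix.of fun _ _ => (m : ℝ)⁻¹

/-- The Frobenius norm of a real `d × m` matrix. -/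
noncomputable def frobNorm {d m : ℕ} (A : Matrix (Fin d) (Fin m) ℝ) : ℝ :=
  Real.sqrt (∑ i, ∑ j, (A i j) ^ 2)

lemma inner_toECLM {m : ℕ} (A : Matrix (Fin m) (Fin m) ℝ) (x y : EuclideanSpace ℝ (Fin m)) :
    ⟪x, Matrix.toEuclideanCLM (𝕜 := ℝ) (n := Fin m) A y⟫_ℝ = (x : Fin m → ℝ) ⬝ᵥ A.mulVec y := by
  simp [PiLp.inner_apply, dotProduct, RCLike.inner_apply]
  exact Finset.sum_congr rfl fun i _ => mul_comm _ _

-- quadratic form bounded by specNorm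
lemma quad_le_specNorm {m : ℕ} (A : Matrix (Fin m) (Fin m) ℝ) (x : Fin m → ℝ) :
    x ⬝ᵥ A.mulVec x ≤ specNorm A * (x ⬝ᵥ x) := by
  set T := Matrix.toEuclideanCLM (𝕜 := ℝ) (n := Fin m) A
  set v : EuclideanSpace ℝ (Fin m) := (WithLp.equiv 2 (Fin m → ℝ)).symm x
  have h1 : x ⬝ᵥ A.mulVec x = ⟪v, T v⟫_ℝ := (inner_toECLM A v v).symm
  have h2 : x ⬝ᵥ x = ‖v‖ ^ 2 := by
    rw [← real_inner_self_eq_norm_sq]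
    simp [PiLp.inner_apply, dotProduct, RCLike.inner_apply, v]
    rw [EuclideanSpace.norm_sq_eq]; simp [sq]
  rw [h1, h2]
  calc ⟪v, T v⟫_ℝ ≤ ‖v‖ * ‖T v‖ := real_inner_le_norm v (T v)
    _ ≤ ‖v‖ * (‖T‖ * ‖v‖) := by
        gcongr; exact T.le_opNorm v
    _ = specNorm A * ‖v‖ ^ 2 := by rw [specNorm]; ring


lemma dot_mulVec_symm {m : ℕ} {A : Matrix (Fin m) (Fin m) ℝ} (hA : Aᵀ = A)
    (x y : Fin m → ℝ) : y ⬝ᵥ A.mulVec x = x ⬝ᵥ A.mulVec y := by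
  rw [Matrix.dotProduct_mulVec, ← Matrix.vecMul_transpose, hA, dotProduct_comm]

lemma specNorm_le_of_quad {m : ℕ} (A : Matrix (Fin m) (Fin m) ℝ) (hA : Aᵀ = A)
    {c : ℝ} (hc : 0 ≤ c)
    (h0 : ∀ x : Fin m → ℝ, 0 ≤ x ⬝ᵥ A.mulVec x)
    (hQ : ∀ x : Fin m → ℝ, x ⬝ᵥ A.mulVec x ≤ c * (x ⬝ᵥ x)) :
    specNorm A ≤ c := by
  set T := Matrix.toEuclideanCLM (𝕜 := ℝ) (n := Fin m) A with hT
  have hsym : ∀ x y : EuclideanSpace ℝ (Fin m), ⟪T x, y⟫_ℝ = ⟪x, T y⟫_ℝ := by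
    intro x y
    rw [real_inner_comm, inner_toECLM, inner_toECLM]
    exact dot_mulVec_symm hA x y
  have h0' : ∀ x : EuclideanSpace ℝ (Fin m), 0 ≤ ⟪x, T x⟫_ℝ := by
    intro x; rw [inner_toECLM]; exact h0 _
  have hQ' : ∀ x : EuclideanSpace ℝ (Fin m), ⟪x, T x⟫_ℝ ≤ c * ‖x‖ ^ 2 := by
    intro x
    have := hQ ((WithLp.equiv 2 (Fin m → ℝ)) x)
    rw [← inner_toECLM] at this
    have hn : ((WithLp.equiv 2 (Fin m → ℝ)) x : Fin m → ℝ) ⬝ᵥ (WithLp.equiv 2 (Fin m → ℝ)) x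
        = ‖x‖ ^ 2 := by
      rw [← real_inner_self_eq_norm_sq]
      simp [PiLp.inner_apply, dotProduct, RCLike.inner_apply]
      rw [EuclideanSpace.norm_sq_eq]; simp [sq]
    rw [hn] at this
    exact this
  -- polarization identity
  have hpol : ∀ a b : EuclideanSpace ℝ (Fin m),
      4 * ⟪T a, b⟫_ℝ = ⟪T (a + b), a + b⟫_ℝ - ⟪T (a - b), a - b⟫_ℝ := by
    intro a b
    simp only [map_add, map_sub, inner_add_left, inner_add_right, inner_sub_left,
      inner_sub_right]
    have hba := hsym b a
    have hc1 := real_inner_comm b (T a)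
    linarith
  -- bilinear bound
  have hbil : ∀ a b : EuclideanSpace ℝ (Fin m), ⟪T a, b⟫_ℝ ≤ c * ‖a‖ * ‖b‖ := by
    intro a b
    rcases eq_or_ne a 0 with rfl | ha
    · simp [norm_nonneg]
    rcases eq_or_ne b 0 with rfl | hb
    · simp
    set t : ℝ := Real.sqrt (‖b‖ / ‖a‖) with ht
    have hna : (0:ℝ) < ‖a‖ := norm_pos_iff.mpr ha
    have hnb : (0:ℝ) < ‖b‖ := norm_pos_iff.mpr hb
    have htpos : 0 < t := Real.sqrt_pos.mpr (by positivity)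
    have key : ⟪T a, b⟫_ℝ = ⟪T (t • a), t⁻¹ • b⟫_ℝ := by
      rw [T.map_smul, inner_smul_left, inner_smul_right]
      simp [RCLike.conj_to_real]
      field_simp
    rw [key]
    have h4 : 4 * ⟪T (t • a), t⁻¹ • b⟫_ℝ ≤ c * ‖t • a + t⁻¹ • b‖ ^ 2 := by
      rw [hpol]
      have k1 := h0' (t • a - t⁻¹ • b)
      have k2 := hQ' (t • a + t⁻¹ • b)
      have e1 := hsym (t • a + t⁻¹ • b) (t • a + t⁻¹ • b)
      have e2 := hsym (t • a - t⁻¹ • b) (t • a - t⁻¹ • b)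
      linarith
    have hna' : ‖t • a‖ = Real.sqrt (‖a‖ * ‖b‖) := by
      rw [norm_smul, Real.norm_eq_abs, abs_of_pos htpos, ht,
        ← Real.sqrt_sq hna.le, ← Real.sqrt_mul (by positivity)]
      rw [Real.sqrt_sq hna.le]
      congr 1
      field_simp
    have hnb' : ‖t⁻¹ • b‖ = Real.sqrt (‖a‖ * ‖b‖) := by
      rw [norm_smul, Real.norm_eq_abs, abs_of_pos (inv_pos.mpr htpos), ht, ← Real.sqrt_inv,
        ← Real.sqrt_sq hnb.le, ← Real.sqrt_mul (by positivity)]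
      rw [Real.sqrt_sq hnb.le]
      congr 1
      field_simp
    have hnorm : ‖t • a + t⁻¹ • b‖ ^ 2 ≤ (2 * Real.sqrt (‖a‖ * ‖b‖)) ^ 2 := by
      have h1 : ‖t • a + t⁻¹ • b‖ ≤ 2 * Real.sqrt (‖a‖ * ‖b‖) := by
        calc ‖t • a + t⁻¹ • b‖ ≤ ‖t • a‖ + ‖t⁻¹ • b‖ := norm_add_le _ _
          _ = 2 * Real.sqrt (‖a‖ * ‖b‖) := by rw [hna', hnb']; ring
      exact pow_le_pow_left₀ (norm_nonneg _) h1 2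
    have hsq : Real.sqrt (‖a‖ * ‖b‖) ^ 2 = ‖a‖ * ‖b‖ := Real.sq_sqrt (by positivity)
    nlinarith [h4, hnorm, hsq]
  -- conclude
  rw [specNorm]
  refine ContinuousLinearMap.opNorm_le_bound _ hc ?_
  intro x
  rcases eq_or_ne (T x) 0 with h | h
  · rw [h, norm_zero]; positivity
  · have hTx : (0:ℝ) < ‖T x‖ := norm_pos_iff.mpr h
    have := hbil x (T x)
    rw [real_inner_self_eq_norm_sq] at this
    nlinarith

noncomputable def gq {d m : ℕ} (X : Matrix (Fin d) (Fin m) ℝ)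
    (C : Matrix (Fin m) (Fin m) ℝ) : ℝ :=
  ∑ i, (X i) ⬝ᵥ C.mulVec (X i)

lemma frob_sq {d m : ℕ} (B : Matrix (Fin d) (Fin m) ℝ) :
    frobNorm B ^ 2 = ∑ i, ∑ j, (B i j) ^ 2 := by
  rw [frobNorm, Real.sq_sqrt]
  positivity

lemma frob_nonneg {d m : ℕ} (B : Matrix (Fin d) (Fin m) ℝ) : 0 ≤ frobNorm B ^ 2 := by
  rw [frob_sq]; positivity

lemma row_sq {d m : ℕ} (X : Matrix (Fin d) (Fin m) ℝ) (B : Matrix (Fin m) (Fin m) ℝ)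
    (i : Fin d) : ∑ j, ((X * B) i j) ^ 2 = (X i) ⬝ᵥ (B * Bᵀ).mulVec (X i) := by
  simp only [Matrix.mul_apply, Matrix.mulVec, dotProduct, Matrix.transpose_apply,
    pow_two, Finset.sum_mul_sum, Finset.mul_sum, Finset.sum_mul]
  rw [Finset.sum_comm]
  refine Finset.sum_congr rfl fun k _ => ?_
  rw [Finset.sum_comm]
  refine Finset.sum_congr rfl fun l _ => ?_
  refine Finset.sum_congr rfl fun j _ => ?_
  ring

lemma frob_mul_sq {d m : ℕ} (X : Matrix (Fin d) (Fin m) ℝ) (B : Matrix (Fin m) (Fin m) ℝ) :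
    frobNorm (X * B) ^ 2 = gq X (B * Bᵀ) := by
  rw [frob_sq, gq]
  exact Finset.sum_congr rfl fun i _ => row_sq X B i

lemma gq_sub {d m : ℕ} (X : Matrix (Fin d) (Fin m) ℝ) (C D : Matrix (Fin m) (Fin m) ℝ) :
    gq X (C - D) = gq X C - gq X D := by
  simp [gq, Matrix.sub_mulVec, dotProduct_sub, Finset.sum_sub_distrib]

lemma gq_triple {d m : ℕ} (X : Matrix (Fin d) (Fin m) ℝ) (C : Matrix (Fin m) (Fin m) ℝ) :
    gq X C = ∑ i, ∑ k, ∑ l, X i k * X i l * C k l := by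
  simp only [gq, Matrix.mulVec, dotProduct, Finset.mul_sum]
  refine Finset.sum_congr rfl fun i _ => Finset.sum_congr rfl fun k _ =>
    Finset.sum_congr rfl fun l _ => ?_
  ring

section JFacts
variable {m : ℕ}

lemma Jmat_transpose : (Jmat m)ᵀ = Jmat m := by ext i j; rfl

lemma Jmat_mul_Jmat (hm : m ≠ 0) : Jmat m * Jmat m = Jmat m := by
  ext i j
  simp [Jmat, Matrix.mul_apply, Finset.sum_const, Finset.card_univ]
  rw [← mul_assoc, mul_inv_cancel₀ (Nat.cast_ne_zero.mpr hm)]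
  simp

lemma mul_Jmat_of_rowsum {W : Matrix (Fin m) (Fin m) ℝ} (h : ∀ i, ∑ j, W i j = 1) :
    W * Jmat m = Jmat m := by
  ext i j
  simp only [Jmat, Matrix.mul_apply, Matrix.of_apply, ← Finset.sum_mul, h i, one_mul]

lemma Jmat_mul_of_colsum {W : Matrix (Fin m) (Fin m) ℝ} (h : ∀ j, ∑ i, W i j = 1) :
    Jmat m * W = Jmat m := by
  ext i j
  simp only [Jmat, Matrix.mul_apply, Matrix.of_apply, ← Finset.mul_sum, h j, mul_one]

lemma as_identity (hm : m ≠ 0) {W : Matrix (Fin m) (Fin m) ℝ} (hs : W.IsSymm)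
    (hr : ∀ i, ∑ j, W i j = 1) (hc : ∀ j, ∑ i, W i j = 1) :
    (W - Jmat m) * (W - Jmat m)ᵀ = Wᵀ * W - Jmat m := by
  have hWt : Wᵀ = W := hs
  rw [Matrix.transpose_sub, hWt, Jmat_transpose, Matrix.sub_mul, Matrix.mul_sub,
    Matrix.mul_sub, mul_Jmat_of_rowsum hr, Jmat_mul_of_colsum hc, Jmat_mul_Jmat hm]
  abel

lemma P_transpose : ((1 : Matrix (Fin m) (Fin m) ℝ) - Jmat m)ᵀ = 1 - Jmat m := by
  rw [Matrix.transpose_sub, Matrix.transpose_one, Jmat_transpose]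

lemma P_idem (hm : m ≠ 0) : ((1 : Matrix (Fin m) (Fin m) ℝ) - Jmat m) * (1 - Jmat m)
    = 1 - Jmat m := by
  rw [Matrix.sub_mul, Matrix.mul_sub, Matrix.mul_sub, one_mul, mul_one, one_mul,
    Jmat_mul_Jmat hm]
  abel

lemma dot_shift {m : ℕ} (M : Matrix (Fin m) (Fin m) ℝ) (u v : Fin m → ℝ) :
    (M.mulVec u) ⬝ᵥ v = u ⬝ᵥ (Mᵀ.mulVec v) := by
  rw [dotProduct_comm, Matrix.dotProduct_mulVec, ← Matrix.mulVec_transpose,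
    dotProduct_comm]

end JFacts

/-- For a random matrix `W` that is a.s. symmetric with every row and column summing to
one, with `WᵀW` integrable (entrywise), `ρ := ‖E[WᵀW] - J‖` is the least constant
`c ≥ 0` with `E[‖X(W - J)‖_F²] ≤ c·‖X(I - J)‖_F²` for all real `d × m` matrices `X`, and
equivalently the largest `p` with `E[‖X(W - J)‖_F²] ≤ (1 - p)·‖X(I - J)‖_F²` for all `X`
satisfies `p = 1 - ρ`. -/
theorem rho_eq_least_constant {m : ℕ} (hm : 2 ≤ m)
    {Ω : Type*} [MeasurableSpace Ω] (μ : Measure Ω) [IsProbabilityMeasure μ]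
    (W : Ω → Matrix (Fin m) (Fin m) ℝ)
    (hae : ∀ᵐ ω ∂μ, (W ω).IsSymm ∧ (∀ i, ∑ j, W ω i j = 1) ∧ (∀ j, ∑ i, W ω i j = 1))
    (hint : ∀ i j, Integrable
      (fun ω => (((W ω)ᵀ * W ω : Matrix (Fin m) (Fin m) ℝ)) i j) μ)
    (ρ : ℝ)
    (hρ : ρ = specNorm ((Matrix.of fun i j =>
        ∫ ω, (((W ω)ᵀ * W ω : Matrix (Fin m) (Fin m) ℝ)) i j ∂μ) - Jmat m)) :
    ρ = sInf {c : ℝ | 0 ≤ c ∧ ∀ (d : ℕ) (X : Matrix (Fin d) (Fin m) ℝ),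
        ∫ ω, frobNorm (X * (W ω - Jmat m)) ^ 2 ∂μ
          ≤ c * frobNorm (X * (1 - Jmat m)) ^ 2} ∧
      sSup {p : ℝ | ∀ (d : ℕ) (X : Matrix (Fin d) (Fin m) ℝ),
        ∫ ω, frobNorm (X * (W ω - Jmat m)) ^ 2 ∂μ
          ≤ (1 - p) * frobNorm (X * (1 - Jmat m)) ^ 2} = 1 - ρ := by
  have hm0 : m ≠ 0 := by omega
  have hm0' : (0:ℝ) < (m:ℝ) := by positivity
  set M : Matrix (Fin m) (Fin m) ℝ := Matrix.of fun i j =>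
    ∫ ω, (((W ω)ᵀ * W ω : Matrix (Fin m) (Fin m) ℝ)) i j ∂μ with hM
  set A : Matrix (Fin m) (Fin m) ℝ := M - Jmat m with hA
  set P : Matrix (Fin m) (Fin m) ℝ := 1 - Jmat m with hP
  -- symmetry of M and A
  have hMsym : Mᵀ = M := by
    ext i j
    simp only [Matrix.transpose_apply, hM, Matrix.of_apply]
    congr 1
    ext ω
    simp only [Matrix.mul_apply, Matrix.transpose_apply]
    exact Finset.sum_congr rfl fun k _ => mul_comm _ _
  have hAsym : Aᵀ = A := by rw [hA, Matrix.transpose_sub, hMsym, Jmat_transpose]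
  -- main integral identity
  have hMain : ∀ (d : ℕ) (X : Matrix (Fin d) (Fin m) ℝ),
      ∫ ω, frobNorm (X * (W ω - Jmat m)) ^ 2 ∂μ = gq X A := by
    intro d X
    have hae2 : ∀ᵐ ω ∂μ, frobNorm (X * (W ω - Jmat m)) ^ 2
        = gq X ((W ω)ᵀ * W ω) - gq X (Jmat m) := by
      filter_upwards [hae] with ω hω
      obtain ⟨hs, hr, hc⟩ := hω
      rw [frob_mul_sq, as_identity hm0 hs hr hc, gq_sub]
    rw [integral_congr_ae hae2]
    have heq : (fun ω => gq X ((W ω)ᵀ * W ω)) =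
        fun ω => ∑ i, ∑ k, ∑ l, X i k * X i l * ((W ω)ᵀ * W ω) k l := by
      funext ω; exact gq_triple X _
    have hint2 : Integrable (fun ω => gq X ((W ω)ᵀ * W ω)) μ := by
      rw [heq]
      exact integrable_finset_sum _ fun i _ => integrable_finset_sum _ fun k _ =>
        integrable_finset_sum _ fun l _ => (hint k l).const_mul _
    rw [integral_sub hint2 (integrable_const _)]
    have h3 : ∫ ω, gq X ((W ω)ᵀ * W ω) ∂μ = gq X M := by
      rw [heq, gq_triple]
      rw [integral_finset_sum _ (fun i _ => integrable_finset_sum _ fun k _ =>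
        integrable_finset_sum _ fun l _ => (hint k l).const_mul _)]
      refine Finset.sum_congr rfl fun i _ => ?_
      rw [integral_finset_sum _ (fun k _ =>
        integrable_finset_sum _ fun l _ => (hint k l).const_mul _)]
      refine Finset.sum_congr rfl fun k _ => ?_
      rw [integral_finset_sum _ (fun l _ => (hint k l).const_mul _)]
      refine Finset.sum_congr rfl fun l _ => ?_
      rw [integral_const_mul]
      rfl
    rw [h3, integral_const, probReal_univ, one_smul, hA, gq_sub]
  -- X(1-J) norm identity
  have hPid : ∀ (d : ℕ) (X : Matrix (Fin d) (Fin m) ℝ),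
      frobNorm (X * (1 - Jmat m)) ^ 2 = gq X P := by
    intro d X
    rw [frob_mul_sq, ← hP, P_transpose, P_idem hm0]
  -- row-vector versions
  have hrow : ∀ (C : Matrix (Fin m) (Fin m) ℝ) (x : Fin m → ℝ),
      gq (Matrix.of fun _ : Fin 1 => x) C = x ⬝ᵥ C.mulVec x := by
    intro C x
    simp only [gq, Fin.sum_univ_one, Matrix.of_apply]
    rfl
  -- A is PSD
  have hPSD : ∀ x : Fin m → ℝ, 0 ≤ x ⬝ᵥ A.mulVec x := by
    intro x
    rw [← hrow A x, ← hMain 1 (Matrix.of fun _ : Fin 1 => x)]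
    exact integral_nonneg fun ω => frob_nonneg _
  -- A * J = 0 and friends
  have hrowM : ∀ i, ∑ k, M i k = 1 := by
    intro i
    have h1 : ∑ k, M i k = ∫ ω, ∑ k, ((W ω)ᵀ * W ω) i k ∂μ := by
      rw [integral_finset_sum _ (fun k _ => hint i k)]
      rfl
    rw [h1]
    have hone : ∀ᵐ ω ∂μ, ∑ k, ((W ω)ᵀ * W ω) i k = 1 := by
      filter_upwards [hae] with ω hω
      obtain ⟨hs, hr, hc⟩ := hω
      simp only [Matrix.mul_apply, Matrix.transpose_apply]
      rw [Finset.sum_comm]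
      calc ∑ l, ∑ k, W ω l i * W ω l k
          = ∑ l, W ω l i * ∑ k, W ω l k := by
            exact Finset.sum_congr rfl fun l _ => (Finset.mul_sum _ _ _).symm
        _ = ∑ l, W ω l i := by simp [hr]
        _ = 1 := hc i
    rw [integral_congr_ae hone, integral_const, probReal_univ, one_smul]
  have hMJ : M * Jmat m = Jmat m := by
    ext i j
    show ∑ k, M i k * Jmat m k j = Jmat m i j
    have : ∀ k, Jmat m k j = (m : ℝ)⁻¹ := fun k => rfl
    simp only [this, ← Finset.sum_mul, hrowM i, one_mul]
  have hAP : A * P = A := by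
    rw [hP, Matrix.mul_sub, mul_one, hA, Matrix.sub_mul, hMJ, Jmat_mul_Jmat hm0]
    abel
  have hPA : P * A = A := by
    have := congrArg Matrix.transpose hAP
    rw [Matrix.transpose_mul, hAsym, P_transpose, ← hP] at this
    exact this
  -- quadratic form of A through P
  have hQproj : ∀ x : Fin m → ℝ, x ⬝ᵥ A.mulVec x = (P.mulVec x) ⬝ᵥ A.mulVec (P.mulVec x) := by
    intro x
    have hPT : Pᵀ = P := by rw [hP]; exact P_transpose
    conv_rhs => rw [dot_shift P x (A.mulVec (P.mulVec x))]
    rw [hPT, Matrix.mulVec_mulVec, Matrix.mulVec_mulVec, hPA, hAP]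
  -- ‖Px‖² = x ⬝ᵥ P x
  have hPnorm : ∀ x : Fin m → ℝ, (P.mulVec x) ⬝ᵥ (P.mulVec x) = x ⬝ᵥ P.mulVec x := by
    intro x
    rw [dot_shift P x (P.mulVec x), Matrix.mulVec_mulVec, P_transpose, ← hP, P_idem hm0]
  -- per-row bound: quadratic of A ≤ ρ · quadratic of P
  have hRow : ∀ x : Fin m → ℝ, x ⬝ᵥ A.mulVec x ≤ ρ * (x ⬝ᵥ P.mulVec x) := by
    intro x
    rw [hQproj x, ← hPnorm x, hρ]
    exact quad_le_specNorm A (P.mulVec x)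
  -- the key inequality with c = ρ
  have hKey : ∀ (d : ℕ) (X : Matrix (Fin d) (Fin m) ℝ),
      ∫ ω, frobNorm (X * (W ω - Jmat m)) ^ 2 ∂μ ≤ ρ * frobNorm (X * (1 - Jmat m)) ^ 2 := by
    intro d X
    rw [hMain d X, hPid d X, gq, gq, Finset.mul_sum]
    exact Finset.sum_le_sum fun i _ => hRow (X i)
  have hρ0 : 0 ≤ ρ := hρ ▸ norm_nonneg _
  -- gq X P nonneg
  have hgqP : ∀ (d : ℕ) (X : Matrix (Fin d) (Fin m) ℝ), 0 ≤ gq X P := by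
    intro d X
    rw [← hPid d X]; exact frob_nonneg _
  -- converse: any valid (nonneg) constant dominates ρ
  have hConv : ∀ c : ℝ, 0 ≤ c →
      (∀ (d : ℕ) (X : Matrix (Fin d) (Fin m) ℝ),
        ∫ ω, frobNorm (X * (W ω - Jmat m)) ^ 2 ∂μ ≤ c * frobNorm (X * (1 - Jmat m)) ^ 2) →
      ρ ≤ c := by
    intro c hc h
    rw [hρ]
    refine specNorm_le_of_quad A hAsym hc hPSD ?_
    intro x
    have h1 := h 1 (Matrix.of fun _ : Fin 1 => x)
    rw [hMain, hPid, hrow, hrow] at h1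
    refine h1.trans ?_
    have hle : x ⬝ᵥ P.mulVec x ≤ x ⬝ᵥ x := by
      set u : EuclideanSpace ℝ (Fin m) := (WithLp.equiv 2 (Fin m → ℝ)).symm x with hu
      set v : EuclideanSpace ℝ (Fin m) := (WithLp.equiv 2 (Fin m → ℝ)).symm (P.mulVec x) with hv
      have e1 : x ⬝ᵥ P.mulVec x = ⟪u, v⟫_ℝ := by
        simp [PiLp.inner_apply, RCLike.inner_apply, dotProduct, hu, hv]
        exact Finset.sum_congr rfl fun i _ => mul_comm _ _
      have e2 : ‖v‖ ^ 2 = x ⬝ᵥ P.mulVec x := by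
        rw [← real_inner_self_eq_norm_sq, ← hPnorm x]
        simp [PiLp.inner_apply, RCLike.inner_apply, dotProduct, hv]
        rw [EuclideanSpace.norm_sq_eq]; simp [sq]
      have e3 : ‖u‖ ^ 2 = x ⬝ᵥ x := by
        rw [← real_inner_self_eq_norm_sq]
        simp [PiLp.inner_apply, RCLike.inner_apply, dotProduct, hu]
        rw [EuclideanSpace.norm_sq_eq]; simp [sq]
      have e4 : ⟪u, v⟫_ℝ ≤ ‖u‖ * ‖v‖ := real_inner_le_norm u v
      nlinarith [norm_nonneg u, norm_nonneg v, sq_nonneg (‖u‖ - ‖v‖)]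
    exact mul_le_mul_of_nonneg_left hle hc
  -- a vector with positive P-quadratic form
  obtain ⟨x₀, hx₀⟩ : ∃ x₀ : Fin m → ℝ, 0 < x₀ ⬝ᵥ P.mulVec x₀ := by
    set i0 : Fin m := ⟨0, by omega⟩
    set i1 : Fin m := ⟨1, by omega⟩
    have h01 : i0 ≠ i1 := by simp [i0, i1, Fin.ext_iff]
    set x₀ : Fin m → ℝ := Pi.single i0 1 - Pi.single i1 1 with hx0
    have hsum : ∑ l, x₀ l = 0 := by
      simp [hx0, Finset.sum_sub_distrib, Finset.sum_pi_single']
    have hJx : (Jmat m).mulVec x₀ = 0 := by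
      funext k
      show ∑ l, Jmat m k l * x₀ l = 0
      have : ∀ l, Jmat m k l = (m : ℝ)⁻¹ := fun l => rfl
      simp only [this, ← Finset.mul_sum, hsum, mul_zero]
    have hPx : P.mulVec x₀ = x₀ := by
      rw [hP, Matrix.sub_mulVec, Matrix.one_mulVec, hJx, sub_zero]
    refine ⟨x₀, ?_⟩
    rw [hPx]
    have hterm : x₀ i0 * x₀ i0 = 1 := by
      simp [hx0, Pi.single_apply, h01]
    have hge : x₀ i0 * x₀ i0 ≤ x₀ ⬝ᵥ x₀ :=
      Finset.single_le_sum (f := fun l => x₀ l * x₀ l)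
        (fun l _ => mul_self_nonneg _) (Finset.mem_univ i0)
    rw [hterm] at hge
    linarith
  constructor
  · -- sInf part
    refine le_antisymm ?_ ?_
    · refine le_csInf ⟨ρ, hρ0, hKey⟩ ?_
      rintro c ⟨hc0, hc⟩
      exact hConv c hc0 hc
    · refine csInf_le ⟨0, fun c hc => hc.1⟩ ⟨hρ0, hKey⟩
  · -- sSup part
    have hub : ∀ p ∈ {p : ℝ | ∀ (d : ℕ) (X : Matrix (Fin d) (Fin m) ℝ),
        ∫ ω, frobNorm (X * (W ω - Jmat m)) ^ 2 ∂μ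
          ≤ (1 - p) * frobNorm (X * (1 - Jmat m)) ^ 2}, p ≤ 1 - ρ := by
      intro p hp
      have h1p : 0 ≤ 1 - p := by
        have h1 := hp 1 (Matrix.of fun _ : Fin 1 => x₀)
        rw [hMain, hPid, hrow, hrow] at h1
        have h2 := hPSD x₀
        nlinarith
      have := hConv (1 - p) h1p hp
      linarith
    refine le_antisymm (csSup_le ⟨1 - ρ, ?_⟩ hub) (le_csSup ⟨1 - ρ, hub⟩ ?_)
    · intro d X
      have := hKey d X
      simpa using this
    · intro d X
      have := hKey d X
      simpa using this
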